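/- Assume for a path scenario R there exist M, m ∈ V_C ∪ {s₀,t₀} with s₀ ≤ M, m ≤ t₀ and m ≤ M such that the (M,m)-canonical ride is optimal. Define Ẑ_m = {z ∈ {s₀,t₀} ∪ V_C : m ≤ z, s₀ ≤ z, and no request (s,t) ∈ C has t < m and z < s}. Then Ẑ_m is nonempty and, letting M̂_m = min Ẑ_m, the (M̂_m, m)-canonical ride is optimal. -/

import Mathlib

/-!
For `m ≤ M` the canonical ride `s₀ ↦ M ↦ left ↦ right ↦ m ↦ t₀` serves a request `(s, t)`
exactly when `m ≤ t` or `s ≤ M`. Feasibility of the optimal `(M, m)`-canonical ride therefore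
puts `M` in `Ẑ_m`, and every `M' ∈ Ẑ_m` yields a feasible `(M', m)`-canonical ride. For
`M' = min Ẑ_m ≤ M` the two rides differ only in the prefix `s₀ ↦ M' ↦ left` versus
`s₀ ↦ M ↦ left`, and the former is never more expensive, so the `(M̂_m, m)`-canonical ride is
optimal as well.
-/

namespace RideSharing

/-- A ride in a graph with adjacency `adj`: a nonempty sequence of nodes where
consecutive nodes are adjacent. -/
def IsRide (adj : ℕ → ℕ → Prop) (π : List ℕ) : Prop :=
  π ≠ [] ∧ π.Chain' adj

/-- The cost of a ride: sum of the weights of traversed edges. -/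
def cost (w : ℕ → ℕ → ℚ) : List ℕ → ℚ
  | [] => 0
  | [_] => 0
  | a :: b :: rest => w a b + cost w (b :: rest)

/-- A ride satisfies a request `(s,t)` if `s` occurs at a time step weakly before
an occurrence of `t`. -/
def Satisfies (π : List ℕ) (s t : ℕ) : Prop :=
  ∃ i j : ℕ, i ≤ j ∧ π[i]? = some s ∧ π[j]? = some t

/-- `Pre π' π` : `π'` is obtained from `π` by (repeatedly) removing a contiguous
subsequence of nodes (the relation `π' ⪯ π` of the paper, stated with 0-based indices:
`π[1,i] , π[i',len]` becomes `π.take (i+1) ++ π.drop i'`). -/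
inductive Pre : List ℕ → List ℕ → Prop
  | refl (π : List ℕ) : Pre π π
  | step (π' π : List ℕ) (i i' : ℕ) :
      i < i' → i' < π.length →
      (π[i + 1]? = π[i']? ∨ π[i]? = π[i' - 1]?) →
      Pre π' (π.take (i + 1) ++ π.drop i') → Pre π' π

/-- A ride-sharing scenario. -/
structure Scenario where
  adj : ℕ → ℕ → Prop
  w : ℕ → ℕ → ℚ
  s0 : ℕ
  t0 : ℕ
  C : Finset (ℕ × ℕ)

def Feasible (R : Scenario) (π : List ℕ) : Prop :=
  IsRide R.adj π ∧ π.head? = some R.s0 ∧ π.getLast? = some R.t0 ∧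
    ∀ r ∈ R.C, Satisfies π r.1 r.2

def Optimal (R : Scenario) (π : List ℕ) : Prop :=
  Feasible R π ∧ ∀ π', Feasible R π' → cost R.w π ≤ cost R.w π'

/-- The set `V_C` of endpoints of requests. -/
def VC (C : Finset (ℕ × ℕ)) : Finset ℕ := C.image Prod.fst ∪ C.image Prod.snd

/-- The path graph on `{1,…,n}`. -/
def pathAdj (n : ℕ) (a b : ℕ) : Prop :=
  (b = a + 1 ∨ a = b + 1) ∧ 1 ≤ a ∧ a ≤ n ∧ 1 ≤ b ∧ b ≤ n

/-- The monotone segment of the path from `x` to `y`. -/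
def seg (x y : ℕ) : List ℕ :=
  if x ≤ y then (List.range (y - x + 1)).map (fun k => x + k)
  else (List.range (x - y + 1)).map (fun k => x - k)

/-- The ride through a list of waypoints, concatenating monotone segments. -/
def rideThrough : List ℕ → List ℕ
  | [] => []
  | [x] => [x]
  | x :: y :: rest => seg x y ++ (rideThrough (y :: rest)).tail

/-- Concatenation of rides (`π ↦ π'`), inserting the monotone connecting segment
if the endpoints differ. -/
def rconcat (a b : List ℕ) : List ℕ :=
  a ++ (seg (a.getLastD 0) (b.headD 0)).tail ++ b.tail


/-- The restricted scenario `R(M,m)`. -/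
def restrict (R : Scenario) (M m : ℕ) : Scenario :=
  ⟨R.adj, R.w, M, m, R.C.filter (fun r => M ≤ r.1 ∧ r.1 ≤ m ∧ M ≤ r.2 ∧ r.2 ≤ m)⟩

/-- `π` is an `(M,m)`-canonical ride for `R` (with `L = left(R)`, `Rt = right(R)`):
`π = π' ↦ π'' ↦ π₃` with `π' = s₀ ↦ M ↦ left ↦ M`, `π'' = M ↦ right` if `m ≤ M`
and `π'' = π̄ ↦ right` for an optimal ride `π̄` of `R(M,m)` if `M < m`, and
`π₃ = right ↦ m ↦ t₀`. -/
def IsCanonical (R : Scenario) (L Rt M m : ℕ) (π : List ℕ) : Prop :=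
  if m ≤ M then
    π = rideThrough [R.s0, M, L, Rt, m, R.t0]
  else
    ∃ πbar, Optimal (restrict R M m) πbar ∧
      π = rconcat (rconcat (rideThrough [R.s0, M, L, M]) (rconcat πbar [Rt]))
            (rideThrough [Rt, m, R.t0])

theorem dropLast_append_eq_append_tail {α : Type*} {a b : List α}
    (h : a.getLast? = b.head?) : a.dropLast ++ b = a ++ b.tail := by
  cases b with
  | nil => cases a <;> simp_all
  | cons y b =>
    rw [← List.dropLast_append_getLast? (l := a) y (by simpa using h)]
    simp

section Seg

theorem seg_of_le {x y : ℕ} (h : x ≤ y) : seg x y = List.range' x (y - x + 1) := by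
  rw [seg, if_pos h, List.range'_eq_map_range]

theorem seg_of_ge {x y : ℕ} (h : y ≤ x) : seg x y = (List.range' y (x - y + 1)).reverse := by
  rcases h.eq_or_lt with rfl | h
  · simp [seg]
  rw [seg, if_neg (by omega), List.reverse_range']
  refine List.map_congr_left fun k hk => ?_
  simp only [List.mem_range] at hk
  omega

theorem mem_seg {x y v : ℕ} : v ∈ seg x y ↔ min x y ≤ v ∧ v ≤ max x y := by
  rcases le_total x y with h | h
  · rw [seg_of_le h, List.mem_range'_1]; omega
  · rw [seg_of_ge h, List.mem_reverse, List.mem_range'_1]; omega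

theorem head?_seg (x y : ℕ) : (seg x y).head? = some x := by
  rcases le_total x y with h | h
  · rw [seg_of_le h, List.range'_succ]; rfl
  · rw [seg_of_ge h, List.range'_1_concat]; simp; omega

theorem seg_ne_nil (x y : ℕ) : seg x y ≠ [] :=
  List.ne_nil_of_mem (List.mem_of_head? (head?_seg x y))

theorem getLast?_seg (x y : ℕ) : (seg x y).getLast? = some y := by
  rcases le_total x y with h | h
  · rw [seg_of_le h, List.range'_1_concat]; simp; omega
  · rw [seg_of_ge h, List.getLast?_reverse, List.range'_succ]; rfl

theorem lt_of_mem_dropLast_seg {x y v : ℕ} (h : x ≤ y) (hv : v ∈ (seg x y).dropLast) :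
    v < y := by
  rw [seg_of_le h, List.range'_1_concat, List.dropLast_concat, List.mem_range'_1] at hv
  omega

theorem seg_eq_dropLast_append {x y z : ℕ} (h : x ≤ y ∧ y ≤ z ∨ z ≤ y ∧ y ≤ x) :
    seg x z = (seg x y).dropLast ++ seg y z := by
  rcases h with ⟨hxy, hyz⟩ | ⟨hzy, hyx⟩
  · rw [seg_of_le hxy, seg_of_le hyz, seg_of_le (hxy.trans hyz),
      List.range'_1_concat (n := y - x), List.dropLast_concat,
      show z - x + 1 = y - x + (z - y + 1) by omega,
      ← List.range'_append_1, Nat.add_sub_cancel' hxy]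
  · rw [seg_of_ge hyx, seg_of_ge hzy, seg_of_ge (hzy.trans hyx), List.dropLast_reverse,
      List.range'_succ (s := y), List.tail_cons, ← List.reverse_append,
      show x - z + 1 = y - z + 1 + (x - y) by omega, ← List.range'_append_1,
      show z + (y - z + 1) = y + 1 by omega]

theorem isChain_seg {n x y : ℕ} (hx : 1 ≤ x ∧ x ≤ n) (hy : 1 ≤ y ∧ y ≤ n) :
    (seg x y).IsChain (pathAdj n) := by
  unfold seg
  split <;>
  · rw [List.isChain_map]
    refine (List.isChain_range_succ _ _).2 fun k hk => ?_
    unfold pathAdj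
    omega

end Seg

section Cost

variable {w : ℕ → ℕ → ℚ}

theorem cost_nonneg (hw : ∀ a b, 0 ≤ w a b) : ∀ l, 0 ≤ cost w l
  | [] | [_] => le_rfl
  | a :: b :: l => add_nonneg (hw a b) (cost_nonneg hw (b :: l))

theorem cost_append_tail : ∀ {a b : List ℕ}, a.getLast? = b.head? →
    cost w (a ++ b.tail) = cost w a + cost w b
  | [], b, h => by cases b <;> simp_all [cost]
  | [x], b, h => by cases b <;> simp_all [cost]
  | x :: y :: a, b, h => by
    have ih := cost_append_tail (a := y :: a) (b := b) h
    simp only [List.cons_append, cost] at ih ⊢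
    rw [ih, add_assoc]

theorem cost_dropLast_append {a b : List ℕ} (h : a.getLast? = b.head?) :
    cost w (a.dropLast ++ b) = cost w a + cost w b := by
  rw [dropLast_append_eq_append_tail h, cost_append_tail h]

theorem cost_seg_eq_add {x y z : ℕ} (h : x ≤ y ∧ y ≤ z ∨ z ≤ y ∧ y ≤ x) :
    cost w (seg x z) = cost w (seg x y) + cost w (seg y z) := by
  rw [seg_eq_dropLast_append h, cost_dropLast_append (by rw [getLast?_seg, head?_seg])]

/-- The part of the detour beyond `y` is either traversed twice or replaces part of the way
from `y` to `z`. -/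
theorem cost_seg_add_cost_seg_le (hw : ∀ a b, 0 ≤ w a b) {x y y' : ℕ} (z : ℕ)
    (h : x ≤ y) (h' : y ≤ y') :
    cost w (seg x y) + cost w (seg y z) ≤ cost w (seg x y') + cost w (seg y' z) := by
  have hxy' := cost_seg_eq_add (w := w) (z := y') (Or.inl ⟨h, h'⟩)
  rcases le_or_gt z y with hzy | hyz
  · rw [cost_seg_eq_add (y := y) (Or.inr ⟨hzy, h'⟩)]
    linarith [cost_nonneg hw (seg y y'), cost_nonneg hw (seg y' y)]
  · rcases le_or_gt z y' with hzy' | hyz'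
    · rw [cost_seg_eq_add (y := z) (Or.inl ⟨hyz.le, hzy'⟩)] at hxy'
      linarith [cost_nonneg hw (seg z y'), cost_nonneg hw (seg y' z)]
    · rw [cost_seg_eq_add (y := y') (Or.inl ⟨h', hyz'.le⟩)]
      linarith

end Cost

section Satisfies

variable {a b : List ℕ} {s t : ℕ}

theorem Satisfies.append_left (h : Satisfies b s t) : Satisfies (a ++ b) s t := by
  obtain ⟨i, j, hij, hi, hj⟩ := h
  exact ⟨a.length + i, a.length + j, by omega, by simpa [List.getElem?_append_right] using hi,
    by simpa [List.getElem?_append_right] using hj⟩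

theorem satisfies_append_of_mem (hs : s ∈ a) (ht : t ∈ b) : Satisfies (a ++ b) s t := by
  obtain ⟨i, hi, rfl⟩ := List.getElem_of_mem hs
  obtain ⟨j, hj, rfl⟩ := List.getElem_of_mem ht
  exact ⟨i, a.length + j, by omega, by simp [List.getElem?_append_left hi, hi],
    by simp [hj]⟩

theorem satisfies_cons_of_mem (ht : t ∈ s :: b) : Satisfies (s :: b) s t := by
  obtain ⟨j, hj⟩ := List.mem_iff_getElem?.1 ht
  exact ⟨0, j, j.zero_le, rfl, hj⟩

theorem satisfies_dropLast_append (h : a.getLast? = b.head?) (hs : s ∈ a) (ht : t ∈ b) :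
    Satisfies (a.dropLast ++ b) s t := by
  cases b with
  | nil => simp at ht
  | cons y b =>
    rw [← List.dropLast_append_getLast? (l := a) y (by simpa using h), List.mem_append,
      List.mem_singleton] at hs
    rcases hs with hs | rfl
    · exact satisfies_append_of_mem hs ht
    · exact (satisfies_cons_of_mem ht).append_left

theorem not_satisfies_append (hs : s ∉ a) (ht : t ∉ b) : ¬Satisfies (a ++ b) s t := by
  rintro ⟨i, j, hij, hi, hj⟩
  have hai : a.length ≤ i := by
    by_contra! hia
    exact hs (List.mem_of_getElem? (by rwa [List.getElem?_append_left hia] at hi))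
  rw [List.getElem?_append_right (by omega)] at hj
  exact ht (List.mem_of_getElem? hj)

end Satisfies

section RideThrough

variable {x y v s t : ℕ} {l : List ℕ}

theorem head?_rideThrough : ∀ l : List ℕ, (rideThrough l).head? = l.head?
  | [] | [_] => rfl
  | x :: y :: l => by simp [rideThrough, List.head?_append, head?_seg]

theorem rideThrough_cons_cons (x y : ℕ) (l : List ℕ) :
    rideThrough (x :: y :: l) = (seg x y).dropLast ++ rideThrough (y :: l) :=
  (dropLast_append_eq_append_tail (by rw [getLast?_seg, head?_rideThrough]; rfl)).symm

theorem getLast?_rideThrough : ∀ l : List ℕ, (rideThrough l).getLast? = l.getLast?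
  | [] | [_] => rfl
  | x :: y :: l => by
    rw [rideThrough_cons_cons, List.getLast?_append, getLast?_rideThrough (y :: l),
      List.getLast?_cons_cons, List.getLast?_cons, Option.some_or]

theorem rideThrough_ne_nil (x : ℕ) (l : List ℕ) : rideThrough (x :: l) ≠ [] := by
  simp [← List.head?_eq_none_iff, head?_rideThrough]

theorem mem_rideThrough_cons_cons (h : v ∈ rideThrough (y :: l)) :
    v ∈ rideThrough (x :: y :: l) := by
  rw [rideThrough_cons_cons]
  exact List.mem_append_right _ h

theorem mem_rideThrough_of_mem_seg (h : v ∈ seg x y) : v ∈ rideThrough (x :: y :: l) :=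
  List.mem_append_left _ h

theorem mem_rideThrough_of_mem : ∀ {l : List ℕ}, v ∈ l → v ∈ rideThrough l
  | [_], h => h
  | x :: y :: l, h => by
    rcases List.mem_cons.1 h with rfl | h
    · exact mem_rideThrough_of_mem_seg (List.mem_of_head? (head?_seg _ _))
    · exact mem_rideThrough_cons_cons (mem_rideThrough_of_mem h)

theorem le_of_mem_rideThrough {a : ℕ} (ha : ∀ x ∈ l, a ≤ x) (hv : v ∈ rideThrough l) :
    a ≤ v := by
  induction l using rideThrough.induct with
  | case1 => simp [rideThrough] at hv
  | case2 x => simp_all [rideThrough]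
  | case3 x y l ih =>
    rcases List.mem_append.1 hv with hv | hv
    · have := ha x (by simp)
      have := ha y (by simp)
      have := mem_seg.1 hv
      omega
    · exact ih (fun z hz => ha z (List.mem_cons_of_mem _ hz)) (List.mem_of_mem_tail hv)

theorem Satisfies.rideThrough_cons_cons (h : Satisfies (rideThrough (y :: l)) s t) :
    Satisfies (rideThrough (x :: y :: l)) s t := by
  rw [RideSharing.rideThrough_cons_cons]
  exact h.append_left

theorem satisfies_rideThrough_of_mem_seg (hs : s ∈ seg x y) (ht : t ∈ rideThrough (y :: l)) :
    Satisfies (rideThrough (x :: y :: l)) s t := by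
  rw [rideThrough_cons_cons]
  exact satisfies_dropLast_append (by rw [getLast?_seg, head?_rideThrough]; rfl) hs ht

theorem rideThrough_eq_of_between {z : ℕ} (h : x ≤ y ∧ y ≤ z ∨ z ≤ y ∧ y ≤ x) :
    rideThrough (x :: z :: l) = rideThrough (x :: y :: z :: l) := by
  rw [rideThrough_cons_cons, rideThrough_cons_cons x y, rideThrough_cons_cons y,
    seg_eq_dropLast_append h, List.dropLast_append_of_ne_nil (seg_ne_nil y z),
    List.append_assoc]

theorem cost_rideThrough_cons_cons (w : ℕ → ℕ → ℚ) (x y : ℕ) (l : List ℕ) :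
    cost w (rideThrough (x :: y :: l)) = cost w (seg x y) + cost w (rideThrough (y :: l)) :=
  cost_append_tail (by rw [getLast?_seg, head?_rideThrough]; rfl)

theorem isChain_rideThrough {n : ℕ} :
    ∀ {l : List ℕ}, (∀ x ∈ l, 1 ≤ x ∧ x ≤ n) → (rideThrough l).IsChain (pathAdj n)
  | [], _ => List.isChain_nil
  | [x], _ => List.isChain_singleton x
  | x :: y :: l, h => by
    have hseg := List.dropLast_append_getLast? (l := seg x y) y (getLast?_seg x y)
    show (seg x y ++ (rideThrough (y :: l)).tail).IsChain _
    rw [← hseg]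
    refine List.IsChain.append_overlap ?_ ?_ (List.cons_ne_nil y [])
    · rw [hseg]
      exact isChain_seg (h x (by simp)) (h y (by simp))
    · rw [List.singleton_append, List.cons_head?_tail (by rw [head?_rideThrough]; rfl)]
      exact isChain_rideThrough fun z hz => h z (List.mem_cons_of_mem x hz)

end RideThrough

theorem bounds_of_isChain_pathAdj {n : ℕ} : ∀ {l : List ℕ} {u v : ℕ},
    l.IsChain (pathAdj n) → u ∈ l → v ∈ l → u ≠ v → 1 ≤ v ∧ v ≤ n
  | [_], _, _, _, hu, hv, huv => by simp_all
  | a :: b :: l, u, v, hl, _, hv, _ => by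
    rw [List.isChain_cons_cons] at hl
    obtain ⟨⟨-, ha, han, hb, hbn⟩, hl⟩ := hl
    rcases List.mem_cons.1 hv with rfl | hv
    · exact ⟨ha, han⟩
    · by_cases hbv : b = v
      · exact hbv ▸ ⟨hb, hbn⟩
      · exact bounds_of_isChain_pathAdj hl List.mem_cons_self hv hbv

def Zhat (s0 t0 m : ℕ) (C : Finset (ℕ × ℕ)) : Finset ℕ :=
  (insert s0 (insert t0 (VC C))).filter (fun z => m ≤ z ∧ s0 ≤ z ∧ ¬∃ r ∈ C, r.2 < m ∧ z < r.1)

theorem isCanonical_iff_of_le {R : Scenario} {L Rt M m : ℕ} {π : List ℕ} (h : m ≤ M) :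
    IsCanonical R L Rt M m π ↔ π = rideThrough [R.s0, M, L, Rt, m, R.t0] := by
  simp [IsCanonical, h]

section Canonical

variable {s0 t0 L Rt M m s t : ℕ} {C : Finset (ℕ × ℕ)}

theorem fst_mem_VC {r : ℕ × ℕ} (hr : r ∈ C) : r.1 ∈ VC C :=
  Finset.mem_union_left _ (Finset.mem_image_of_mem _ hr)

theorem snd_mem_VC {r : ℕ × ℕ} (hr : r ∈ C) : r.2 ∈ VC C :=
  Finset.mem_union_right _ (Finset.mem_image_of_mem _ hr)

/-- Before its first visit to a node `s > M` the ride has only seen nodes below `s`, and from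
then on it never goes below `m`; so a request with `t < m` is served iff `s ≤ M`. -/
theorem satisfies_rideThrough_iff (hs0M : s0 ≤ M) (hmM : m ≤ M) (hmt0 : m ≤ t0)
    (hs : L ≤ s ∧ s ≤ Rt) (ht : L ≤ t ∧ t ≤ Rt) :
    Satisfies (rideThrough [s0, M, L, Rt, m, t0]) s t ↔ m ≤ t ∨ s ≤ M := by
  constructor
  · intro hsat
    by_contra! hbad
    rw [rideThrough_cons_cons s0, rideThrough_cons_cons M, rideThrough_eq_of_between (Or.inl hs),
      rideThrough_cons_cons L s, ← List.append_assoc, ← List.append_assoc] at hsat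
    refine not_satisfies_append (fun hmem => ?_) (fun hmem => ?_) hsat
    · simp only [List.mem_append] at hmem
      rcases hmem with (hv | hv) | hv
      · have := mem_seg.1 (List.dropLast_subset _ hv); omega
      · have := mem_seg.1 (List.dropLast_subset _ hv); omega
      · have := lt_of_mem_dropLast_seg hs.1 hv; omega
    · have := le_of_mem_rideThrough (a := t + 1) (by simp; omega) hmem
      omega
  · rintro (hmt | hsM)
    · have hsat : Satisfies (rideThrough [L, Rt, m, t0]) s t :=
        satisfies_rideThrough_of_mem_seg (mem_seg.2 (by omega))
          (mem_rideThrough_of_mem_seg (mem_seg.2 (by omega)))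
      exact hsat.rideThrough_cons_cons.rideThrough_cons_cons
    · exact (satisfies_rideThrough_of_mem_seg (mem_seg.2 (by omega))
        (mem_rideThrough_of_mem_seg (mem_seg.2 (by omega)))).rideThrough_cons_cons

theorem forall_satisfies_rideThrough_iff (hL : IsLeast {v | v ∈ VC C} L)
    (hR : IsGreatest {v | v ∈ VC C} Rt) (hs0M : s0 ≤ M) (hmM : m ≤ M) (hmt0 : m ≤ t0) :
    (∀ r ∈ C, Satisfies (rideThrough [s0, M, L, Rt, m, t0]) r.1 r.2) ↔
      ¬∃ r ∈ C, r.2 < m ∧ M < r.1 := by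
  simp only [not_exists, not_and, not_lt]
  refine forall₂_congr fun r hr => ?_
  rw [satisfies_rideThrough_iff hs0M hmM hmt0 ⟨hL.2 (fst_mem_VC hr), hR.2 (fst_mem_VC hr)⟩
    ⟨hL.2 (snd_mem_VC hr), hR.2 (snd_mem_VC hr)⟩]
  constructor <;> omega

theorem mem_Zhat_of_feasible {adj : ℕ → ℕ → Prop} {w : ℕ → ℕ → ℚ}
    (hL : IsLeast {v | v ∈ VC C} L) (hR : IsGreatest {v | v ∈ VC C} Rt)
    (hM : M ∈ VC C ∪ {s0, t0}) (hs0M : s0 ≤ M) (hmM : m ≤ M) (hmt0 : m ≤ t0)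
    (h : Feasible ⟨adj, w, s0, t0, C⟩ (rideThrough [s0, M, L, Rt, m, t0])) :
    M ∈ Zhat s0 t0 m C := by
  refine Finset.mem_filter.2 ⟨?_, hmM, hs0M,
    (forall_satisfies_rideThrough_iff hL hR hs0M hmM hmt0).1 h.2.2.2⟩
  simp only [Finset.mem_union, Finset.mem_insert, Finset.mem_singleton] at hM ⊢
  tauto

theorem optimal_rideThrough_of_mem_Zhat {n : ℕ} {w : ℕ → ℕ → ℚ} {M' : ℕ}
    (hw : ∀ a b, 0 ≤ w a b) (hL : IsLeast {v | v ∈ VC C} L) (hR : IsGreatest {v | v ∈ VC C} Rt)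
    (hmt0 : m ≤ t0) (hM' : M' ∈ Zhat s0 t0 m C) (hM'M : M' ≤ M)
    (hopt : Optimal ⟨pathAdj n, w, s0, t0, C⟩ (rideThrough [s0, M, L, Rt, m, t0])) :
    Optimal ⟨pathAdj n, w, s0, t0, C⟩ (rideThrough [s0, M', L, Rt, m, t0]) := by
  obtain ⟨-, hmM', hs0M', hreq⟩ := Finset.mem_filter.1 hM'
  rcases hM'M.eq_or_lt with rfl | hM'M
  · exact hopt
  have hchain := hopt.1.1.2
  -- The optimal ride visits `s0 ≠ M`, so it has an edge and its waypoints are nodes of the path.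
  have hbound : ∀ x ∈ [s0, M, L, Rt, m, t0], 1 ≤ x ∧ x ≤ n := by
    intro x hx
    by_cases hx0 : x = s0
    · exact hx0 ▸ bounds_of_isChain_pathAdj hchain (mem_rideThrough_of_mem (by simp))
        (mem_rideThrough_of_mem (by simp)) (show M ≠ s0 by omega)
    · exact bounds_of_isChain_pathAdj hchain (mem_rideThrough_of_mem (by simp))
        (mem_rideThrough_of_mem hx) (Ne.symm hx0)
  have hfeas : Feasible ⟨pathAdj n, w, s0, t0, C⟩ (rideThrough [s0, M', L, Rt, m, t0]) := by
    refine ⟨⟨rideThrough_ne_nil _ _, isChain_rideThrough fun x hx => ?_⟩, head?_rideThrough _,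
      getLast?_rideThrough _, (forall_satisfies_rideThrough_iff hL hR hs0M' hmM' hmt0).2 hreq⟩
    rcases eq_or_ne x M' with rfl | hxM'
    · have := hbound s0 (by simp)
      have := hbound M (by simp)
      omega
    · refine hbound x ?_
      simp only [List.mem_cons, List.not_mem_nil, or_false] at hx ⊢
      tauto
  have hcost : cost w (rideThrough [s0, M', L, Rt, m, t0]) ≤
      cost w (rideThrough [s0, M, L, Rt, m, t0]) := by
    rw [cost_rideThrough_cons_cons, cost_rideThrough_cons_cons,
      cost_rideThrough_cons_cons w s0 M, cost_rideThrough_cons_cons w M]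
    linarith [cost_seg_add_cost_seg_le hw L hs0M' hM'M.le]
  exact ⟨hfeas, fun ρ hρ => hcost.trans (hopt.2 ρ hρ)⟩

end Canonical

theorem canonical_m_le_M_general (n : ℕ) (w : ℕ → ℕ → ℚ)
    (hwpos : ∀ a b, 0 < w a b)
    (s0 t0 : ℕ) (C : Finset (ℕ × ℕ)) (L Rt : ℕ)
    (hL : IsLeast {v | v ∈ VC C} L) (hR : IsGreatest {v | v ∈ VC C} Rt)
    (M m : ℕ) (hM : M ∈ VC C ∪ {s0, t0})
    (hs0M : s0 ≤ M) (hmt0 : m ≤ t0) (hmM : m ≤ M)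
    (hcan : ∃ π, IsCanonical ⟨pathAdj n, w, s0, t0, C⟩ L Rt M m π ∧
      Optimal ⟨pathAdj n, w, s0, t0, C⟩ π) :
    ∃ hZ : ((insert s0 (insert t0 (VC C))).filter
        (fun z => m ≤ z ∧ s0 ≤ z ∧ ¬∃ r ∈ C, r.2 < m ∧ z < r.1)).Nonempty,
      ∀ π, IsCanonical ⟨pathAdj n, w, s0, t0, C⟩ L Rt
          (((insert s0 (insert t0 (VC C))).filter
            (fun z => m ≤ z ∧ s0 ≤ z ∧ ¬∃ r ∈ C, r.2 < m ∧ z < r.1)).min' hZ) m π →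
        Optimal ⟨pathAdj n, w, s0, t0, C⟩ π := by
  obtain ⟨π, hπ, hopt⟩ := hcan
  obtain rfl := (isCanonical_iff_of_le hmM).1 hπ
  have hMZ : M ∈ Zhat s0 t0 m C := mem_Zhat_of_feasible hL hR hM hs0M hmM hmt0 hopt.1
  refine ⟨⟨M, hMZ⟩, fun π' hπ' => ?_⟩
  have hM'Z := (Zhat s0 t0 m C).min'_mem ⟨M, hMZ⟩
  obtain rfl := (isCanonical_iff_of_le (Finset.mem_filter.1 hM'Z).2.1).1 hπ'
  exact optimal_rideThrough_of_mem_Zhat (fun a b => (hwpos a b).le) hL hR hmt0 hM'Z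
    ((Zhat s0 t0 m C).min'_le M hMZ) hopt

/-- if the `(M,m)`-canonical ride with `m ≤ M` is optimal, then
`Ẑ_m` is nonempty and the `(M̂_m, m)`-canonical ride with `M̂_m = min Ẑ_m` is optimal. -/
theorem canonical_m_le_M (n : ℕ) (w : ℕ → ℕ → ℚ)
    (hwpos : ∀ a b, 0 < w a b) (hwsym : ∀ a b, w a b = w b a)
    (s0 t0 : ℕ) (C : Finset (ℕ × ℕ)) (L Rt : ℕ)
    (hL : IsLeast {v | v ∈ VC C} L) (hR : IsGreatest {v | v ∈ VC C} Rt)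
    (M m : ℕ) (hM : M ∈ VC C ∪ {s0, t0}) (hm : m ∈ VC C ∪ {s0, t0})
    (hs0M : s0 ≤ M) (hmt0 : m ≤ t0) (hmM : m ≤ M)
    (hcan : ∃ π, IsCanonical ⟨pathAdj n, w, s0, t0, C⟩ L Rt M m π ∧
      Optimal ⟨pathAdj n, w, s0, t0, C⟩ π) :
    ∃ hZ : ((insert s0 (insert t0 (VC C))).filter
        (fun z => m ≤ z ∧ s0 ≤ z ∧ ¬∃ r ∈ C, r.2 < m ∧ z < r.1)).Nonempty,
      ∀ π, IsCanonical ⟨pathAdj n, w, s0, t0, C⟩ L Rt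
          (((insert s0 (insert t0 (VC C))).filter
            (fun z => m ≤ z ∧ s0 ≤ z ∧ ¬∃ r ∈ C, r.2 < m ∧ z < r.1)).min' hZ) m π →
        Optimal ⟨pathAdj n, w, s0, t0, C⟩ π :=
  canonical_m_le_M_general n w hwpos s0 t0 C L Rt hL hR M m hM hs0M hmt0 hmM hcan

end RideSharing
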